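/- Let p, e, s : (0,∞)² → ℝ be C² functions of (ρ,θ) satisfying Gibbs' relations θ ∂s/∂θ = ∂e/∂θ and θ ∂s/∂ρ = ∂e/∂ρ − p/ρ², and the hypothesis of thermodynamic stability ∂p/∂ρ(ρ,θ) > 0 and ∂e/∂θ(ρ,θ) > 0 for all ρ, θ > 0. Let K ⊂ (0,∞)² be compact and let K̃ be a compact subset of the interior of K. Then there exists a constant C > 0, depending only on p, e, s, K, K̃, such that for every ε > 0, every (ρ,θ) ∈ K, every (ρ̃,θ̃) ∈ K̃, and every u, ũ ∈ ℝ³: E_ε(ρ,θ,u | ρ̃,θ̃,ũ) ≥ C ( |ρ−ρ̃|²/ε² + |θ−θ̃|²/ε² + |u−ũ|² ). -/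

import Mathlib

/-!
With `H(ρ,θ) = ρ (e − θ̃ s)` and the Gibbs energy `G = e − θ s + p/ρ`, the thermal part of
`E_ε` is `[H(ρ,θ) − H(ρ,θ̃)] + [H(ρ,θ̃) − H(ρ̃,θ̃) − G(ρ̃,θ̃)(ρ − ρ̃)]`.
Gibbs' relations give `∂_θ H = ρ ∂_θ e (θ − θ̃)/θ`, so `θ ↦ H(ρ,θ)` grows quadratically away
from its minimum at `θ̃`; they also give `∂_ρ H(·,θ̃) = G(·,θ̃)` and `∂_ρ G = ∂_ρ p / ρ`, so the
second bracket is the Bregman divergence of a uniformly convex function. The two rates of growth,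
and the lower bound on `ρ` for the kinetic part, are uniform on a square `[a,b]²` containing `K`,
by compactness and continuity of the first partial derivatives.
-/

open Set

noncomputable def relEnergy (p e s : ℝ → ℝ → ℝ) (ε : ℝ)
    (ρ θ : ℝ) (u : EuclideanSpace ℝ (Fin 3))
    (ρt θt : ℝ) (ut : EuclideanSpace ℝ (Fin 3)) : ℝ :=
  1/2 * ρ * ‖u - ut‖^2
    + 1/ε^2 * (ρ * e ρ θ - θt * (ρ * s ρ θ - ρt * s ρt θt)
      - (e ρt θt - θt * s ρt θt + p ρt θt / ρt) * (ρ - ρt) - ρt * e ρt θt)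

open Function

section Calculus

variable {x y c : ℝ}

lemma le_of_hasDerivAt_of_mul_sub_nonneg {φ φ' : ℝ → ℝ}
    (hφ : ∀ t ∈ uIcc y x, HasDerivAt φ (φ' t) t)
    (hsign : ∀ t ∈ uIcc y x, 0 ≤ φ' t * (t - y)) : φ y ≤ φ x := by
  rcases le_total y x with hyx | hxy
  · rw [uIcc_of_le hyx] at hφ hsign
    refine monotoneOn_of_hasDerivWithinAt_nonneg (convex_Icc y x)
      (fun t ht => (hφ t ht).continuousAt.continuousWithinAt)
      (fun t ht => (hφ t (interior_subset ht)).hasDerivWithinAt) (fun t ht => ?_)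
      (left_mem_Icc.2 hyx) (right_mem_Icc.2 hyx) hyx
    rw [interior_Icc] at ht
    exact nonneg_of_mul_nonneg_left (hsign t (Ioo_subset_Icc_self ht)) (sub_pos.2 ht.1)
  · rw [uIcc_of_ge hxy] at hφ hsign
    refine antitoneOn_of_hasDerivWithinAt_nonpos (convex_Icc x y)
      (fun t ht => (hφ t ht).continuousAt.continuousWithinAt)
      (fun t ht => (hφ t (interior_subset ht)).hasDerivWithinAt) (fun t ht => ?_)
      (left_mem_Icc.2 hxy) (right_mem_Icc.2 hxy) hxy
    rw [interior_Icc] at ht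
    exact nonpos_of_mul_nonneg_left (hsign t (Ioo_subset_Icc_self ht)) (sub_neg.2 ht.2)

lemma half_mul_sq_le_sub_of_hasDerivAt {f f' : ℝ → ℝ}
    (hf : ∀ t ∈ uIcc y x, HasDerivAt f (f' t) t)
    (hsign : ∀ t ∈ uIcc y x, c * (t - y) ^ 2 ≤ f' t * (t - y)) :
    c / 2 * (x - y) ^ 2 ≤ f x - f y := by
  have key := le_of_hasDerivAt_of_mul_sub_nonneg (φ := fun t => f t - c / 2 * (t - y) ^ 2)
    (φ' := fun t => f' t - c * (t - y)) (x := x)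
    (fun t ht => ((hf t ht).sub ((((hasDerivAt_id' t).sub_const y).pow 2).const_mul (c / 2)))
      |>.congr_deriv (by ring))
    (fun t ht => by linarith [hsign t ht])
  linarith

lemma mul_sq_le_sub_mul_sub_of_le_deriv {g g' : ℝ → ℝ}
    (hg : ∀ t ∈ uIcc y x, HasDerivAt g (g' t) t) (hc : ∀ t ∈ uIcc y x, c ≤ g' t) :
    c * (x - y) ^ 2 ≤ (g x - g y) * (x - y) := by
  have growth := convex_uIcc y x |>.mul_sub_le_image_sub_of_le_deriv
    (fun t ht => (hg t ht).continuousAt.continuousWithinAt)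
    (fun t ht => (hg t (interior_subset ht)).differentiableAt.differentiableWithinAt)
    (fun t ht => (hg t (interior_subset ht)).deriv ▸ hc t (interior_subset ht))
  rcases le_total y x with hyx | hxy
  · nlinarith [growth y left_mem_uIcc x right_mem_uIcc hyx]
  · nlinarith [growth x right_mem_uIcc y left_mem_uIcc hxy]

end Calculus

section PartialDerivatives

variable {F : ℝ → ℝ → ℝ} {x y : ℝ}

lemma hasDerivAt_uncurry_left (h : DifferentiableAt ℝ (uncurry F) (x, y)) :
    HasDerivAt (F · y) (fderiv ℝ (uncurry F) (x, y) (1, 0)) x :=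
  (h.hasFDerivAt.comp_hasDerivAt x ((hasDerivAt_id' x).prodMk (hasDerivAt_const x y)) :)

lemma hasDerivAt_uncurry_right (h : DifferentiableAt ℝ (uncurry F) (x, y)) :
    HasDerivAt (F x ·) (fderiv ℝ (uncurry F) (x, y) (0, 1)) y :=
  (h.hasFDerivAt.comp_hasDerivAt y ((hasDerivAt_const y x).prodMk (hasDerivAt_id' y)) :)

lemma ContDiffOn.continuousOn_deriv_left {U : Set (ℝ × ℝ)} (hU : IsOpen U)
    (hF : ContDiffOn ℝ 1 (uncurry F) U) :
    ContinuousOn (fun q : ℝ × ℝ => deriv (F · q.2) q.1) U :=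
  ((hF.continuousOn_fderiv_of_isOpen hU le_rfl).clm_apply continuousOn_const).congr fun _ hq =>
    (hasDerivAt_uncurry_left ((hF.differentiableOn one_ne_zero).differentiableAt
      (hU.mem_nhds hq))).deriv

lemma ContDiffOn.continuousOn_deriv_right {U : Set (ℝ × ℝ)} (hU : IsOpen U)
    (hF : ContDiffOn ℝ 1 (uncurry F) U) :
    ContinuousOn (fun q : ℝ × ℝ => deriv (F q.1 ·) q.2) U :=
  ((hF.continuousOn_fderiv_of_isOpen hU le_rfl).clm_apply continuousOn_const).congr fun _ hq =>
    (hasDerivAt_uncurry_right ((hF.differentiableOn one_ne_zero).differentiableAt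
      (hU.mem_nhds hq))).deriv

lemma DifferentiableOn.differentiableAt_left {U : Set (ℝ × ℝ)} (hU : IsOpen U)
    (hF : DifferentiableOn ℝ (uncurry F) U) (hxy : (x, y) ∈ U) : DifferentiableAt ℝ (F · y) x :=
  (hasDerivAt_uncurry_left (hF.differentiableAt (hU.mem_nhds hxy))).differentiableAt

lemma DifferentiableOn.differentiableAt_right {U : Set (ℝ × ℝ)} (hU : IsOpen U)
    (hF : DifferentiableOn ℝ (uncurry F) U) (hxy : (x, y) ∈ U) : DifferentiableAt ℝ (F x ·) y :=
  (hasDerivAt_uncurry_right (hF.differentiableAt (hU.mem_nhds hxy))).differentiableAt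

end PartialDerivatives

lemma IsCompact.exists_subset_Icc_prod_Icc {K : Set (ℝ × ℝ)} (hK : IsCompact K)
    (hpos : K ⊆ Ioi 0 ×ˢ Ioi 0) : ∃ a b : ℝ, 0 < a ∧ K ⊆ Icc a b ×ˢ Icc a b := by
  obtain ⟨a, ha, hle⟩ := hK.exists_forall_le' (continuous_fst.min continuous_snd).continuousOn
    fun q hq => lt_min (hpos hq).1 (hpos hq).2
  obtain ⟨b, hb⟩ := (hK.image (continuous_fst.max continuous_snd)).bddAbove
  refine ⟨a, b, ha, fun q hq => ?_⟩
  have hqb : max q.1 q.2 ≤ b := hb (mem_image_of_mem _ hq)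
  exact ⟨⟨(hle q hq).trans (min_le_left _ _), (le_max_left _ _).trans hqb⟩,
    ⟨(hle q hq).trans (min_le_right _ _), (le_max_right _ _).trans hqb⟩⟩

section Thermodynamics

variable {p e s : ℝ → ℝ → ℝ}

def ballisticFreeEnergy (e s : ℝ → ℝ → ℝ) (Θ ρ θ : ℝ) : ℝ := ρ * (e ρ θ - Θ * s ρ θ)

noncomputable def gibbsEnergy (p e s : ℝ → ℝ → ℝ) (ρ θ : ℝ) : ℝ := e ρ θ - θ * s ρ θ + p ρ θ / ρ

lemma relEnergy_eq (ε ρ θ : ℝ) (u : EuclideanSpace ℝ (Fin 3)) (ρt θt : ℝ)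
    (ut : EuclideanSpace ℝ (Fin 3)) :
    relEnergy p e s ε ρ θ u ρt θt ut = 1/2 * ρ * ‖u - ut‖^2 + 1/ε^2 *
      (ballisticFreeEnergy e s θt ρ θ - ballisticFreeEnergy e s θt ρt θt
        - gibbsEnergy p e s ρt θt * (ρ - ρt)) := by
  unfold relEnergy ballisticFreeEnergy gibbsEnergy
  ring

lemma hasDerivAt_ballisticFreeEnergy_temp {Θ ρ θ : ℝ} (hθ : θ ≠ 0)
    (he : DifferentiableAt ℝ (e ρ ·) θ) (hs : DifferentiableAt ℝ (s ρ ·) θ)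
    (hGibbs : θ * deriv (s ρ ·) θ = deriv (e ρ ·) θ) :
    HasDerivAt (ballisticFreeEnergy e s Θ ρ) (ρ * deriv (e ρ ·) θ / θ * (θ - Θ)) θ := by
  refine ((he.hasDerivAt.sub (hs.hasDerivAt.const_mul Θ)).const_mul ρ).congr_deriv ?_
  rw [← hGibbs]
  field_simp

lemma hasDerivAt_ballisticFreeEnergy_density {ρ θ : ℝ} (hρ : ρ ≠ 0)
    (he : DifferentiableAt ℝ (e · θ) ρ) (hs : DifferentiableAt ℝ (s · θ) ρ)
    (hGibbs : θ * deriv (s · θ) ρ = deriv (e · θ) ρ - p ρ θ / ρ ^ 2) :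
    HasDerivAt (ballisticFreeEnergy e s θ · θ) (gibbsEnergy p e s ρ θ) ρ := by
  refine ((hasDerivAt_id' ρ).mul (he.hasDerivAt.sub (hs.hasDerivAt.const_mul θ))).congr_deriv ?_
  rw [Pi.sub_apply, mul_sub, hGibbs, gibbsEnergy]
  field_simp
  ring

lemma hasDerivAt_gibbsEnergy {ρ θ : ℝ} (hρ : ρ ≠ 0) (hp : DifferentiableAt ℝ (p · θ) ρ)
    (he : DifferentiableAt ℝ (e · θ) ρ) (hs : DifferentiableAt ℝ (s · θ) ρ)
    (hGibbs : θ * deriv (s · θ) ρ = deriv (e · θ) ρ - p ρ θ / ρ ^ 2) :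
    HasDerivAt (gibbsEnergy p e s · θ) (deriv (p · θ) ρ / ρ) ρ := by
  refine ((he.hasDerivAt.sub (hs.hasDerivAt.const_mul θ)).add
    (hp.hasDerivAt.div (hasDerivAt_id' ρ) hρ)).congr_deriv ?_
  rw [hGibbs]
  field_simp
  ring

lemma ballisticFreeEnergy_sub_temp_ge
    (he : DifferentiableOn ℝ (uncurry e) (Ioi 0 ×ˢ Ioi 0))
    (hs : DifferentiableOn ℝ (uncurry s) (Ioi 0 ×ˢ Ioi 0))
    (hGibbs1 : ∀ ρ θ : ℝ, 0 < ρ → 0 < θ →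
      θ * deriv (fun ϑ => s ρ ϑ) θ = deriv (fun ϑ => e ρ ϑ) θ)
    {c ρ θ θt : ℝ} (hρ : 0 < ρ) (hθ : 0 < θ) (hθt : 0 < θt)
    (hc : ∀ t ∈ uIcc θt θ, c ≤ ρ * deriv (e ρ ·) t / t) :
    c / 2 * (θ - θt) ^ 2 ≤ ballisticFreeEnergy e s θt ρ θ - ballisticFreeEnergy e s θt ρ θt := by
  refine half_mul_sq_le_sub_of_hasDerivAt (f' := fun t => ρ * deriv (e ρ ·) t / t * (t - θt))
    (fun t ht => ?_) (fun t ht => ?_)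
  · have ht0 : 0 < t := (lt_min hθt hθ).trans_le ht.1
    have hU : IsOpen (Ioi (0:ℝ) ×ˢ Ioi (0:ℝ)) := isOpen_Ioi.prod isOpen_Ioi
    exact hasDerivAt_ballisticFreeEnergy_temp ht0.ne' (he.differentiableAt_right hU ⟨hρ, ht0⟩)
      (hs.differentiableAt_right hU ⟨hρ, ht0⟩) (hGibbs1 ρ t hρ ht0)
  · linarith [mul_le_mul_of_nonneg_right (hc t ht) (sq_nonneg (t - θt))]

lemma ballisticFreeEnergy_sub_density_ge
    (hp : DifferentiableOn ℝ (uncurry p) (Ioi 0 ×ˢ Ioi 0))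
    (he : DifferentiableOn ℝ (uncurry e) (Ioi 0 ×ˢ Ioi 0))
    (hs : DifferentiableOn ℝ (uncurry s) (Ioi 0 ×ˢ Ioi 0))
    (hGibbs2 : ∀ ρ θ : ℝ, 0 < ρ → 0 < θ →
      θ * deriv (fun ϱ => s ϱ θ) ρ = deriv (fun ϱ => e ϱ θ) ρ - p ρ θ / ρ^2)
    {c ρ ρt θt : ℝ} (hρ : 0 < ρ) (hρt : 0 < ρt) (hθt : 0 < θt)
    (hc : ∀ r ∈ uIcc ρt ρ, c ≤ deriv (p · θt) r / r) :
    c / 2 * (ρ - ρt) ^ 2 ≤ ballisticFreeEnergy e s θt ρ θt - ballisticFreeEnergy e s θt ρt θt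
      - gibbsEnergy p e s ρt θt * (ρ - ρt) := by
  have hG : ∀ r ∈ uIcc ρt ρ,
      HasDerivAt (ballisticFreeEnergy e s θt · θt) (gibbsEnergy p e s r θt) r ∧
        HasDerivAt (gibbsEnergy p e s · θt) (deriv (p · θt) r / r) r := by
    intro r hr
    have hr0 : 0 < r := (lt_min hρt hρ).trans_le hr.1
    have hU : IsOpen (Ioi (0:ℝ) ×ˢ Ioi (0:ℝ)) := isOpen_Ioi.prod isOpen_Ioi
    have he' := he.differentiableAt_left hU ⟨hr0, hθt⟩
    have hs' := hs.differentiableAt_left hU ⟨hr0, hθt⟩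
    exact ⟨hasDerivAt_ballisticFreeEnergy_density hr0.ne' he' hs' (hGibbs2 r θt hr0 hθt),
      hasDerivAt_gibbsEnergy hr0.ne' (hp.differentiableAt_left hU ⟨hr0, hθt⟩) he' hs'
        (hGibbs2 r θt hr0 hθt)⟩
  have key := half_mul_sq_le_sub_of_hasDerivAt (c := c) (x := ρ) (y := ρt)
    (f := fun r => ballisticFreeEnergy e s θt r θt - gibbsEnergy p e s ρt θt * r)
    (f' := fun r => gibbsEnergy p e s r θt - gibbsEnergy p e s ρt θt)
    (fun r hr => ((hG r hr).1.sub ((hasDerivAt_id' r).const_mul _)).congr_deriv (by rw [mul_one]))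
    (fun r hr => mul_sq_le_sub_mul_sub_of_le_deriv
      (fun t ht => (hG t (uIcc_subset_uIcc_left hr ht)).2)
      (fun t ht => hc t (uIcc_subset_uIcc_left hr ht)))
  linarith

lemma le_relEnergy {m ε ρ θ ρt θt : ℝ} (u ut : EuclideanSpace ℝ (Fin 3)) (hε : 0 < ε)
    (hρ : m ≤ ρ)
    (hθ : m / 2 * (θ - θt) ^ 2 ≤
      ballisticFreeEnergy e s θt ρ θ - ballisticFreeEnergy e s θt ρ θt)
    (hρθ : m / 2 * (ρ - ρt) ^ 2 ≤ ballisticFreeEnergy e s θt ρ θt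
      - ballisticFreeEnergy e s θt ρt θt - gibbsEnergy p e s ρt θt * (ρ - ρt)) :
    m / 2 * (|ρ - ρt| ^ 2 / ε ^ 2 + |θ - θt| ^ 2 / ε ^ 2 + ‖u - ut‖ ^ 2)
      ≤ relEnergy p e s ε ρ θ u ρt θt ut := by
  rw [relEnergy_eq, sq_abs, sq_abs]
  calc m / 2 * ((ρ - ρt) ^ 2 / ε ^ 2 + (θ - θt) ^ 2 / ε ^ 2 + ‖u - ut‖ ^ 2)
      = m / 2 * ‖u - ut‖ ^ 2 + 1 / ε ^ 2 * (m / 2 * (ρ - ρt) ^ 2 + m / 2 * (θ - θt) ^ 2) := by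
        ring
    _ ≤ 1 / 2 * ρ * ‖u - ut‖ ^ 2 + 1 / ε ^ 2 * (ballisticFreeEnergy e s θt ρ θ
        - ballisticFreeEnergy e s θt ρt θt - gibbsEnergy p e s ρt θt * (ρ - ρt)) := by
        gcongr
        · linarith
        · linarith

end Thermodynamics

theorem stmt_10_general (p e s : ℝ → ℝ → ℝ)
    (hp : ContDiffOn ℝ 2 (fun q : ℝ × ℝ => p q.1 q.2) (Ioi (0:ℝ) ×ˢ Ioi (0:ℝ)))
    (he : ContDiffOn ℝ 2 (fun q : ℝ × ℝ => e q.1 q.2) (Ioi (0:ℝ) ×ˢ Ioi (0:ℝ)))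
    (hs : ContDiffOn ℝ 2 (fun q : ℝ × ℝ => s q.1 q.2) (Ioi (0:ℝ) ×ˢ Ioi (0:ℝ)))
    (hGibbs1 : ∀ ρ θ : ℝ, 0 < ρ → 0 < θ →
      θ * deriv (fun ϑ => s ρ ϑ) θ = deriv (fun ϑ => e ρ ϑ) θ)
    (hGibbs2 : ∀ ρ θ : ℝ, 0 < ρ → 0 < θ →
      θ * deriv (fun ϱ => s ϱ θ) ρ = deriv (fun ϱ => e ϱ θ) ρ - p ρ θ / ρ^2)
    (hstab1 : ∀ ρ θ : ℝ, 0 < ρ → 0 < θ → 0 < deriv (fun a => p a θ) ρ)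
    (hstab2 : ∀ ρ θ : ℝ, 0 < ρ → 0 < θ → 0 < deriv (fun b => e ρ b) θ)
    (K Kt : Set (ℝ × ℝ)) (hK : IsCompact K) (hKsub : K ⊆ Ioi (0:ℝ) ×ˢ Ioi (0:ℝ))
    (hKtsub : Kt ⊆ interior K) :
    ∃ C : ℝ, 0 < C ∧ ∀ ε : ℝ, 0 < ε → ∀ ρθ ∈ K, ∀ ρθt ∈ Kt,
      ∀ u ut : EuclideanSpace ℝ (Fin 3),
        C * (|ρθ.1 - ρθt.1|^2 / ε^2 + |ρθ.2 - ρθt.2|^2 / ε^2 + ‖u - ut‖^2)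
          ≤ relEnergy p e s ε ρθ.1 ρθ.2 u ρθt.1 ρθt.2 ut := by
  obtain ⟨a, b, ha, hKQ⟩ := hK.exists_subset_Icc_prod_Icc hKsub
  have hQc : IsCompact (Icc a b ×ˢ Icc a b) := isCompact_Icc.prod isCompact_Icc
  have hQ : Icc a b ×ˢ Icc a b ⊆ Ioi (0:ℝ) ×ˢ Ioi (0:ℝ) :=
    fun q hq => ⟨ha.trans_le hq.1.1, ha.trans_le hq.2.1⟩
  have hU : IsOpen (Ioi (0:ℝ) ×ˢ Ioi (0:ℝ)) := isOpen_Ioi.prod isOpen_Ioi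
  obtain ⟨c₁, hc₁, hc₁le⟩ := hQc.exists_forall_le'
    ((((hp.of_le one_le_two).continuousOn_deriv_left hU).mono hQ).div continuousOn_fst
      fun q hq => (hQ hq).1.ne')
    fun q hq => div_pos (hstab1 _ _ (hQ hq).1 (hQ hq).2) (hQ hq).1
  obtain ⟨c₂, hc₂, hc₂le⟩ := hQc.exists_forall_le'
    ((continuousOn_fst.mul (((he.of_le one_le_two).continuousOn_deriv_right hU).mono hQ)).div
      continuousOn_snd fun q hq => (hQ hq).2.ne')
    fun q hq => div_pos (mul_pos (hQ hq).1 (hstab2 _ _ (hQ hq).1 (hQ hq).2)) (hQ hq).2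
  have hp₁ := hp.differentiableOn two_ne_zero
  have he₁ := he.differentiableOn two_ne_zero
  have hs₁ := hs.differentiableOn two_ne_zero
  refine ⟨min (min c₁ c₂) a / 2, by positivity, ?_⟩
  rintro ε hε ⟨ρ, θ⟩ hρθ ⟨ρt, θt⟩ hρθt u ut
  obtain ⟨hρ, hθ⟩ := hKQ hρθ
  obtain ⟨hρt, hθt⟩ := hKQ (interior_subset (hKtsub hρθt))
  refine le_relEnergy u ut hε ((min_le_right _ _).trans hρ.1) ?_ ?_
  · exact ballisticFreeEnergy_sub_temp_ge he₁ hs₁ hGibbs1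
      (ha.trans_le hρ.1) (ha.trans_le hθ.1) (ha.trans_le hθt.1)
      fun t ht => ((min_le_left _ _).trans (min_le_right _ _)).trans
        (hc₂le (ρ, t) ⟨hρ, uIcc_subset_Icc hθt hθ ht⟩)
  · exact ballisticFreeEnergy_sub_density_ge hp₁ he₁ hs₁ hGibbs2
      (ha.trans_le hρ.1) (ha.trans_le hρt.1) (ha.trans_le hθt.1)
      fun r hr => ((min_le_left _ _).trans (min_le_left _ _)).trans
        (hc₁le (r, θt) ⟨uIcc_subset_Icc hρt hρ hr, hθt⟩)

/-- coercivity of the relative energy in the essential range: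
under Gibbs' relations and thermodynamic stability, for compact `K ⊂ (0,∞)²`
and compact `K̃ ⊂ int K`, there is `C > 0` such that
`E_ε(ρ,θ,u | ρ̃,θ̃,ũ) ≥ C(|ρ−ρ̃|²/ε² + |θ−θ̃|²/ε² + |u−ũ|²)`
for all `ε > 0`, `(ρ,θ) ∈ K`, `(ρ̃,θ̃) ∈ K̃`, `u, ũ ∈ ℝ³`. -/
theorem stmt_10 (p e s : ℝ → ℝ → ℝ)
    (hp : ContDiffOn ℝ 2 (fun q : ℝ × ℝ => p q.1 q.2) (Ioi (0:ℝ) ×ˢ Ioi (0:ℝ)))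
    (he : ContDiffOn ℝ 2 (fun q : ℝ × ℝ => e q.1 q.2) (Ioi (0:ℝ) ×ˢ Ioi (0:ℝ)))
    (hs : ContDiffOn ℝ 2 (fun q : ℝ × ℝ => s q.1 q.2) (Ioi (0:ℝ) ×ˢ Ioi (0:ℝ)))
    (hGibbs1 : ∀ ρ θ : ℝ, 0 < ρ → 0 < θ →
      θ * deriv (fun ϑ => s ρ ϑ) θ = deriv (fun ϑ => e ρ ϑ) θ)
    (hGibbs2 : ∀ ρ θ : ℝ, 0 < ρ → 0 < θ →
      θ * deriv (fun ϱ => s ϱ θ) ρ = deriv (fun ϱ => e ϱ θ) ρ - p ρ θ / ρ^2)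
    (hstab1 : ∀ ρ θ : ℝ, 0 < ρ → 0 < θ → 0 < deriv (fun a => p a θ) ρ)
    (hstab2 : ∀ ρ θ : ℝ, 0 < ρ → 0 < θ → 0 < deriv (fun b => e ρ b) θ)
    (K Kt : Set (ℝ × ℝ)) (hK : IsCompact K) (hKsub : K ⊆ Ioi (0:ℝ) ×ˢ Ioi (0:ℝ))
    (hKt : IsCompact Kt) (hKtsub : Kt ⊆ interior K) :
    ∃ C : ℝ, 0 < C ∧ ∀ ε : ℝ, 0 < ε → ∀ ρθ ∈ K, ∀ ρθt ∈ Kt,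
      ∀ u ut : EuclideanSpace ℝ (Fin 3),
        C * (|ρθ.1 - ρθt.1|^2 / ε^2 + |ρθ.2 - ρθt.2|^2 / ε^2 + ‖u - ut‖^2)
          ≤ relEnergy p e s ε ρθ.1 ρθ.2 u ρθt.1 ρθt.2 ut :=
  stmt_10_general p e s hp he hs hGibbs1 hGibbs2 hstab1 hstab2 K Kt hK hKsub hKtsub
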